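/- arXiv:2405.19667 — 6 statements merged into one kernel-verified Lean document; each statement's English description precedes it below -/
import Mathlib

section
/- (Failure of prediction-level reconciliation for decision making.) Fix any φ ∈ (0, 1/3). Let 𝒳 = {1, 2} with P(x=1) = P(x=2) = 1/2, binary labels y ∈ {0,1} with P(y=1 | x=1) = 0 and P(y=1 | x=2) = 1. Consider the misclassification loss ℓ(y,a) = 1{y ≠ a} over actions {0,1}, with best-response policy taking action 1 on a scalar prediction p if p > 1/2 and action 0 otherwise. Define predictors f₁(1) = 1/2 − φ/2, f₁(2) = 1/2 − 3φ/2, and the reconciled predictor g(1) = 1/2 + φ/2, g(2) = 1/2 − φ/2. Then g agrees everywhere with the predictor f₂ given by f₂(1) = 1/2 + φ/2, f₂(2) = 1/2 − φ/2, yet the expected decision loss strictly increases: E[ℓ(y, π^BR(g(x)))] − E[ℓ(y, π^BR(f₁(x)))] = 1/2 > 0. -/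
/-- Failure of prediction-level reconciliation for decision making.
`X = Fin 2` with uniform mass `1/2` on each point, `P(y=1|x=0) = 0`, `P(y=1|x=1) = 1`,
misclassification loss over actions `Fin 2`, and best-response policy `π` taking action
`1` iff the prediction exceeds `1/2`.  The expected decision loss of a predictor `h` is
`loss h = (1/2)·1{π(h 0) ≠ 0} + (1/2)·1{π(h 1) ≠ 1}` (the conditional expected
misclassification loss given each `x`, weighted by `P(x)`).  The reconciled predictor `g`
agrees everywhere with `f₂`, yet its expected decision loss exceeds that of `f₁`
by exactly `1/2`. -/
theorem reconcile_can_increase_decision_loss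
    (φ : ℝ) (hφ : φ ∈ Set.Ioo (0 : ℝ) (1/3))
    (f₁ g f₂ : Fin 2 → ℝ)
    (hf₁0 : f₁ 0 = 1/2 - φ/2) (hf₁1 : f₁ 1 = 1/2 - 3*φ/2)
    (hg0 : g 0 = 1/2 + φ/2) (hg1 : g 1 = 1/2 - φ/2)
    (hf₂0 : f₂ 0 = 1/2 + φ/2) (hf₂1 : f₂ 1 = 1/2 - φ/2)
    (π : ℝ → Fin 2) (hπ : ∀ p, π p = if 1/2 < p then 1 else 0)
    (loss : (Fin 2 → ℝ) → ℝ)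
    (hloss : ∀ h, loss h =
      (1/2) * (if π (h 0) = 0 then 0 else 1) + (1/2) * (if π (h 1) = 1 then 0 else 1)) :
    (∀ x, g x = f₂ x) ∧ loss g - loss f₁ = 1/2 ∧ (0 : ℝ) < 1/2 := by
  obtain ⟨h0, h1⟩ := hφ
  refine ⟨fun x => by fin_cases x <;> simp [hg0, hg1, hf₂0, hf₂1], ?_, by norm_num⟩
  rw [hloss, hloss, hg0, hg1, hf₁0, hf₁1]; simp only [hπ]
  rw [if_pos (show (1:ℝ)/2 < 1/2+φ/2 by linarith), if_neg (show ¬(1:ℝ)/2 < 1/2-φ/2 by linarith),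
    if_neg (show ¬(1:ℝ)/2 < 1/2-3*φ/2 by linarith)]
  norm_num
end

section
/- (Decision calibration of individual predictors does not prevent best-response disagreement.) Fix η ∈ (0, 1/4) and β ∈ (0, 1/2). Let 𝒳 = {1,2,3,4} with P(1) = P(4) = 1/2 − η and P(2) = P(3) = η, binary labels with true conditional probabilities f*(1) = β/2 and f*(2) = f*(3) = f*(4) = 1 − β/2. Let v = β/2 + 2η(1−β), and define predictors f₁(1) = f₁(2) = f₂(1) = f₂(3) = v and f₁(3) = f₁(4) = f₂(2) = f₂(4) = 1 − β/2. Consider the misclassification loss over actions {0,1} with best-response policy taking action 1 if the prediction exceeds 1/2 and action 0 otherwise. Then: (i) v < 1/2 and 1 − β/2 > 1/2; (ii) both f₁ and f₂ are exactly decision-calibrated, i.e. for each i ∈ {1,2} and each a ∈ {0,1}, E[(f*(x) − f_i(x)) · 1{π^BR(f_i(x)) = a}] = 0; and (iii) the set {x : π^BR(f₁(x)) ≠ π^BR(f₂(x))} equals {2,3} and has probability mass 2η. -/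
/-- Decision calibration of individual predictors does not prevent
best-response disagreement.  `X = Fin 4` (units `1,2,3,4` are `0,1,2,3`) with masses
`P 0 = P 3 = 1/2 - η`, `P 1 = P 2 = η`, binary labels with true conditional
probabilities `fstar`, predictors `f₁, f₂` built from `v = β/2 + 2η(1-β)`, and
best-response policy `π` for the misclassification loss taking action `1` iff the
prediction exceeds `1/2`.  Then (i) `v < 1/2 < 1 - β/2`; (ii) both `f₁` and `f₂` are
exactly decision-calibrated; and (iii) the best-response disagreement set is exactly
`{1, 2}` with total mass `2η`. -/
theorem decision_calibrated_predictors_can_disagree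
    (η β : ℝ) (hη : η ∈ Set.Ioo (0 : ℝ) (1/4)) (hβ : β ∈ Set.Ioo (0 : ℝ) (1/2))
    (P fstar f₁ f₂ : Fin 4 → ℝ) (v : ℝ)
    (hP0 : P 0 = 1/2 - η) (hP3 : P 3 = 1/2 - η) (hP1 : P 1 = η) (hP2 : P 2 = η)
    (hs0 : fstar 0 = β/2) (hs1 : fstar 1 = 1 - β/2)
    (hs2 : fstar 2 = 1 - β/2) (hs3 : fstar 3 = 1 - β/2)
    (hv : v = β/2 + 2*η*(1-β))
    (hf₁0 : f₁ 0 = v) (hf₁1 : f₁ 1 = v)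
    (hf₁2 : f₁ 2 = 1 - β/2) (hf₁3 : f₁ 3 = 1 - β/2)
    (hf₂0 : f₂ 0 = v) (hf₂2 : f₂ 2 = v)
    (hf₂1 : f₂ 1 = 1 - β/2) (hf₂3 : f₂ 3 = 1 - β/2)
    (π : ℝ → Fin 2) (hπ : ∀ p, π p = if 1/2 < p then 1 else 0) :
    (v < 1/2 ∧ 1/2 < 1 - β/2)
    ∧ (∀ a : Fin 2,
        ∑ x : Fin 4, P x * (fstar x - f₁ x) * (if π (f₁ x) = a then 1 else 0) = 0)
    ∧ (∀ a : Fin 2,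
        ∑ x : Fin 4, P x * (fstar x - f₂ x) * (if π (f₂ x) = a then 1 else 0) = 0)
    ∧ {x : Fin 4 | π (f₁ x) ≠ π (f₂ x)} = {1, 2}
    ∧ ∑ x ∈ ({1, 2} : Finset (Fin 4)), P x = 2 * η := by
  obtain ⟨hη0, hη4⟩ := hη
  obtain ⟨hβ0, hβ2⟩ := hβ
  have hvlt : v < 1/2 := by nlinarith
  have hgt : (1:ℝ)/2 < 1 - β/2 := by linarith
  have hπv : π v = 0 := by rw [hπ, if_neg (by linarith)]
  have hπb : π (1 - β/2) = 1 := by rw [hπ, if_pos (by linarith)]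
  refine ⟨⟨hvlt, hgt⟩, ?_, ?_, ?_, ?_⟩
  · intro a
    simp only [Fin.sum_univ_four, hP0, hP1, hP2, hP3, hs0, hs1, hs2, hs3,
      hf₁0, hf₁1, hf₁2, hf₁3, hπv, hπb]
    fin_cases a <;> simp <;> nlinarith [hv]
  · intro a
    simp only [Fin.sum_univ_four, hP0, hP1, hP2, hP3, hs0, hs1, hs2, hs3,
      hf₂0, hf₂1, hf₂2, hf₂3, hπv, hπb]
    fin_cases a <;> simp <;> nlinarith [hv]
  · ext x
    fin_cases x <;>
      simp [hf₁0, hf₁1, hf₁2, hf₁3, hf₂0, hf₂1, hf₂2, hf₂3, hπv, hπb]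
  · simp [Finset.sum_pair (by decide : (1 : Fin 4) ≠ 2), hP1, hP2]; ring
end

section
/- (Large disagreement falsifies one predictor.) Let f₁, f₂ : 𝒳 → [0,1]^d be predictors, let ℓ be a linear loss with vectors ℓ_a ∈ [0,1]^d, let α > 0, and let E = E^α_{ℓ,a₁,a₂}(f₁, f₂) be the disagreement event, i.e. the set of x such that π_ℓ^BR(f₁(x)) = a₁, π_ℓ^BR(f₂(x)) = a₂ with a₁ ≠ a₂, and either ⟨f₁(x), ℓ_{a₂} − ℓ_{a₁}⟩ > α or ⟨f₂(x), ℓ_{a₁} − ℓ_{a₂}⟩ > α. If μ(E) > 0, then for some i ∈ {1,2}, ‖E_{x}[f_i(x) − f*(x) | E]‖₂ ≥ α / (2√d). -/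
/-!
On the disagreement event `E` the two best responses are opposite, so with `v = ℓ a₂ - ℓ a₁`
we get `⟪f₁ x - f₂ x, v⟫ ≥ α` pointwise on `E`; averaging over `E` (where `f*` cancels) gives
`⟪m₁ - m₂, v⟫ ≥ α` for the conditional mean errors `mᵢ = E[fᵢ - f* | E]`. Cauchy–Schwarz with
`‖v‖ ≤ √d` then forces `‖m₁‖ + ‖m₂‖ ≥ α / √d`.
-/

open MeasureTheory
open scoped RealInnerProductSpace

theorem EuclideanSpace.norm_le_sqrt_card_of_abs_le_one {ι : Type*} [Fintype ι]
    {v : EuclideanSpace ℝ ι} (hv : ∀ i, |v i| ≤ 1) : ‖v‖ ≤ √(Fintype.card ι) := by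
  rw [EuclideanSpace.norm_eq]
  gcongr
  calc ∑ i, ‖v i‖ ^ 2 ≤ ∑ _i : ι, (1 : ℝ) :=
        Finset.sum_le_sum fun i _ => pow_le_one₀ (norm_nonneg _) (hv i)
    _ = Fintype.card ι := by simp

theorem integrable_of_forall_mem_Icc {X ι : Type*} [MeasurableSpace X] [Fintype ι]
    {μ : Measure X} [IsFiniteMeasure μ] {f : X → EuclideanSpace ℝ ι} (hf : Measurable f)
    (hrange : ∀ x i, f x i ∈ Set.Icc (0 : ℝ) 1) : Integrable f μ :=
  .of_bound hf.aestronglyMeasurable _ <| .of_forall fun x =>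
    EuclideanSpace.norm_le_sqrt_card_of_abs_le_one fun i =>
      abs_le.2 ⟨by linarith [(hrange x i).1], (hrange x i).2⟩

section InnerProductSpace

variable {F : Type*} [NormedAddCommGroup F] [InnerProductSpace ℝ F]

theorem le_inner_sub_of_opposite_preferences {p q w₁ w₂ : F} {α : ℝ}
    (hp : ⟪p, w₁⟫ ≤ ⟪p, w₂⟫) (hq : ⟪q, w₂⟫ ≤ ⟪q, w₁⟫)
    (h : α < ⟪p, w₂ - w₁⟫ ∨ α < ⟪q, w₁ - w₂⟫) : α ≤ ⟪p - q, w₂ - w₁⟫ := by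
  simp only [inner_sub_left, inner_sub_right] at h ⊢
  rcases h with h | h <;> linarith

theorem le_norm_or_le_norm_of_le_inner_sub {u w v : F} {α s : ℝ}
    (h : α ≤ ⟪u - w, v⟫) (hv : ‖v‖ ≤ s) : α / (2 * s) ≤ ‖u‖ ∨ α / (2 * s) ≤ ‖w‖ := by
  rcases (norm_nonneg v).trans hv |>.eq_or_lt with rfl | hs
  · simp -- the bound is `α / 0 = 0`
  have hsum : α ≤ (‖u‖ + ‖w‖) * s :=
    calc α ≤ ‖u - w‖ * ‖v‖ := h.trans (real_inner_le_norm _ _)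
      _ ≤ (‖u‖ + ‖w‖) * s := by gcongr; exact norm_sub_le _ _
  rw [div_le_iff₀ (by positivity), div_le_iff₀ (by positivity)]
  by_contra! hlt
  nlinarith [hlt.1, hlt.2]

variable {X : Type*} [MeasurableSpace X] {μ : Measure X}

theorem average_sub {f g : X → F} (hf : Integrable f μ) (hg : Integrable g μ) :
    ⨍ x, f x - g x ∂μ = ⨍ x, f x ∂μ - ⨍ x, g x ∂μ := by
  simp only [average_eq, integral_sub hf hg, smul_sub]

theorem le_inner_setAverage_of_forall_mem [CompleteSpace F] {f : X → F} {s : Set X} {v : F}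
    {α : ℝ} (hs : MeasurableSet s) (h0 : μ s ≠ 0) (hfin : μ s ≠ ⊤) (hf : IntegrableOn f s μ)
    (hα : ∀ x ∈ s, α ≤ ⟪f x, v⟫) : α ≤ ⟪⨍ x in s, f x ∂μ, v⟫ :=
  Convex.set_average_mem (s := {w | α ≤ ⟪w, v⟫})
    (convex_halfSpace_ge ((innerₛₗ ℝ).flip v).isLinear α)
    (isClosed_le continuous_const (continuous_id.inner continuous_const)) h0 hfin
    (ae_restrict_of_forall_mem hs hα) hf

end InnerProductSpace

theorem large_disagreement_falsifies_a_predictor_general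
    {X : Type*} [MeasurableSpace X] {d K : ℕ}
    (𝒟 : Measure (X × EuclideanSpace ℝ (Fin d))) [IsProbabilityMeasure 𝒟]
    (f₁ f₂ : X → EuclideanSpace ℝ (Fin d))
    (hf₁_meas : Measurable f₁) (hf₂_meas : Measurable f₂)
    (hf₁_range : ∀ x j, f₁ x j ∈ Set.Icc (0 : ℝ) 1)
    (hf₂_range : ∀ x j, f₂ x j ∈ Set.Icc (0 : ℝ) 1)
    (fstar : X → EuclideanSpace ℝ (Fin d)) (hfstar_meas : Measurable fstar)
    (hfstar : (fun p : X × EuclideanSpace ℝ (Fin d) => fstar p.1)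
      =ᵐ[𝒟] 𝒟[(fun p : X × EuclideanSpace ℝ (Fin d) => p.2) |
        MeasurableSpace.comap Prod.fst inferInstance])
    (ℓ : Fin K → EuclideanSpace ℝ (Fin d)) (hℓ : ∀ a j, ℓ a j ∈ Set.Icc (0 : ℝ) 1)
    (π₁ π₂ : X → Fin K) (hπ₁_meas : Measurable π₁) (hπ₂_meas : Measurable π₂)
    (hπ₁ : ∀ x a, ⟪f₁ x, ℓ (π₁ x)⟫ ≤ ⟪f₁ x, ℓ a⟫)
    (hπ₂ : ∀ x a, ⟪f₂ x, ℓ (π₂ x)⟫ ≤ ⟪f₂ x, ℓ a⟫)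
    (a₁ a₂ : Fin K) (α : ℝ)
    (E : Set X)
    (hE : E = {x | π₁ x = a₁ ∧ π₂ x = a₂ ∧
      (α < ⟪f₁ x, ℓ a₂ - ℓ a₁⟫ ∨ α < ⟪f₂ x, ℓ a₁ - ℓ a₂⟫)})
    (hμE : 0 < (𝒟.map Prod.fst) E) :
    α / (2 * Real.sqrt d) ≤
        ‖((𝒟.map Prod.fst) E).toReal⁻¹ •
          ∫ x in E, (f₁ x - fstar x) ∂(𝒟.map Prod.fst)‖
    ∨ α / (2 * Real.sqrt d) ≤
        ‖((𝒟.map Prod.fst) E).toReal⁻¹ •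
          ∫ x in E, (f₂ x - fstar x) ∂(𝒟.map Prod.fst)‖ := by
  set μ := 𝒟.map Prod.fst
  have : IsProbabilityMeasure μ := Measure.isProbabilityMeasure_map measurable_fst.aemeasurable
  have hE_meas : MeasurableSet E := by
    rw [hE, Set.ofPred_and, Set.ofPred_and, Set.ofPred_or]
    exact (hπ₁_meas (measurableSet_singleton a₁)).inter <|
      (hπ₂_meas (measurableSet_singleton a₂)).inter <|
        (measurableSet_lt measurable_const (hf₁_meas.inner measurable_const)).union
          (measurableSet_lt measurable_const (hf₂_meas.inner measurable_const))
  have hfstar_int : Integrable fstar μ :=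
    (integrable_map_measure hfstar_meas.aestronglyMeasurable measurable_fst.aemeasurable).2
      (integrable_condExp.congr hfstar.symm)
  have herr₁ : IntegrableOn (fun x => f₁ x - fstar x) E μ :=
    ((integrable_of_forall_mem_Icc hf₁_meas hf₁_range).sub hfstar_int).integrableOn
  have herr₂ : IntegrableOn (fun x => f₂ x - fstar x) E μ :=
    ((integrable_of_forall_mem_Icc hf₂_meas hf₂_range).sub hfstar_int).integrableOn
  have hv : ‖ℓ a₂ - ℓ a₁‖ ≤ √d := by
    simpa using EuclideanSpace.norm_le_sqrt_card_of_abs_le_one (v := ℓ a₂ - ℓ a₁) fun j => by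
      rw [PiLp.sub_apply, abs_le]
      constructor <;> linarith [hℓ a₁ j |>.1, hℓ a₁ j |>.2, hℓ a₂ j |>.1, hℓ a₂ j |>.2]
  have hgap : α ≤ ⟪⨍ x in E, (f₁ x - fstar x) ∂μ - ⨍ x in E, (f₂ x - fstar x) ∂μ,
      ℓ a₂ - ℓ a₁⟫ := by
    rw [← average_sub herr₁ herr₂]
    refine le_inner_setAverage_of_forall_mem hE_meas hμE.ne' (measure_ne_top μ E)
      (herr₁.sub herr₂) fun x hx => ?_
    rw [hE] at hx
    obtain ⟨rfl, rfl, hx⟩ := hx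
    rw [sub_sub_sub_cancel_right]
    exact le_inner_sub_of_opposite_preferences (hπ₁ x _) (hπ₂ x _) hx
  simpa only [setAverage_eq, measureReal_def] using le_norm_or_le_norm_of_le_inner_sub hgap hv

/-- Large disagreement falsifies one predictor.  If the disagreement
event `E = E^α_{ℓ,a₁,a₂}(f₁,f₂)` has positive mass under the marginal `μ = 𝒟.map fst`,
then for some `i ∈ {1,2}` the conditional mean prediction error of `f_i` on `E`
satisfies `‖E[f_i(x) - f*(x) | E]‖₂ ≥ α/(2√d)`, where `f*` is (a version of) the
conditional label expectation. -/
theorem large_disagreement_falsifies_a_predictor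
    {X : Type*} [MeasurableSpace X] {d K : ℕ} (hd : 0 < d)
    (𝒟 : Measure (X × EuclideanSpace ℝ (Fin d))) [IsProbabilityMeasure 𝒟]
    (hY : ∀ᵐ p ∂𝒟, ∀ j, p.2 j ∈ Set.Icc (0 : ℝ) 1)
    (f₁ f₂ : X → EuclideanSpace ℝ (Fin d))
    (hf₁_meas : Measurable f₁) (hf₂_meas : Measurable f₂)
    (hf₁_range : ∀ x j, f₁ x j ∈ Set.Icc (0 : ℝ) 1)
    (hf₂_range : ∀ x j, f₂ x j ∈ Set.Icc (0 : ℝ) 1)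
    (fstar : X → EuclideanSpace ℝ (Fin d)) (hfstar_meas : Measurable fstar)
    (hfstar : (fun p : X × EuclideanSpace ℝ (Fin d) => fstar p.1)
      =ᵐ[𝒟] 𝒟[(fun p : X × EuclideanSpace ℝ (Fin d) => p.2) |
        MeasurableSpace.comap Prod.fst inferInstance])
    (ℓ : Fin K → EuclideanSpace ℝ (Fin d)) (hℓ : ∀ a j, ℓ a j ∈ Set.Icc (0 : ℝ) 1)
    (π₁ π₂ : X → Fin K) (hπ₁_meas : Measurable π₁) (hπ₂_meas : Measurable π₂)
    (hπ₁ : ∀ x a, ⟪f₁ x, ℓ (π₁ x)⟫ ≤ ⟪f₁ x, ℓ a⟫)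
    (hπ₂ : ∀ x a, ⟪f₂ x, ℓ (π₂ x)⟫ ≤ ⟪f₂ x, ℓ a⟫)
    (a₁ a₂ : Fin K) (hne : a₁ ≠ a₂) (α : ℝ) (hα : 0 < α)
    (E : Set X)
    (hE : E = {x | π₁ x = a₁ ∧ π₂ x = a₂ ∧
      (α < ⟪f₁ x, ℓ a₂ - ℓ a₁⟫ ∨ α < ⟪f₂ x, ℓ a₁ - ℓ a₂⟫)})
    (hμE : 0 < (𝒟.map Prod.fst) E) :
    α / (2 * Real.sqrt d) ≤
        ‖((𝒟.map Prod.fst) E).toReal⁻¹ •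
          ∫ x in E, (f₁ x - fstar x) ∂(𝒟.map Prod.fst)‖
    ∨ α / (2 * Real.sqrt d) ≤
        ‖((𝒟.map Prod.fst) E).toReal⁻¹ •
          ∫ x in E, (f₂ x - fstar x) ∂(𝒟.map Prod.fst)‖ :=
  large_disagreement_falsifies_a_predictor_general 𝒟 f₁ f₂ hf₁_meas hf₂_meas hf₁_range hf₂_range
    fstar hfstar_meas hfstar ℓ hℓ π₁ π₂ hπ₁_meas hπ₂_meas hπ₁ hπ₂ a₁ a₂ α E hE hμE
end

section
/- (Brier score improvement from patching.) Let f : 𝒳 → [0,1]^d be a predictor, let E ⊆ 𝒳 be a measurable event with μ(E) > 0, and let φ = E_{(x,y)∼𝒟}[y − f(x) | E]. Define the patched predictor f'(x) = proj_{[0,1]^d}(f(x) + φ·1_E(x)), where proj_{[0,1]^d} is the Euclidean projection onto the cube [0,1]^d. Then B(f, 𝒟) − B(f', 𝒟) ≥ ‖φ‖₂² · μ(E). -/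
/-
Adding the indicator of `E` times the conditional mean residual `φ` to a predictor lowers
the Brier score by exactly `‖φ‖² μ(E)`: on `E` the new residual is the old one minus its mean,
and removing the mean of a vector-valued variable lowers its second moment by the squared
norm of the mean.  Projecting back onto `[0,1]^d` cannot increase the Brier score further,
since clamping a coordinate moves it closer to every label in `[0,1]`.
-/

open MeasureTheory

/-- The Euclidean projection onto the cube `[0,1]^d` (coordinatewise clamping). -/
noncomputable def projCube {d : ℕ} (v : EuclideanSpace ℝ (Fin d)) :
    EuclideanSpace ℝ (Fin d) :=
  WithLp.toLp 2 (fun j => min 1 (max 0 (v j)))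

open scoped RealInnerProductSpace

def unitCube (d : ℕ) : Set (EuclideanSpace ℝ (Fin d)) :=
  {v | ∀ j, v j ∈ Set.Icc (0 : ℝ) 1}

section Cube

variable {d : ℕ}

lemma abs_min_one_max_zero_sub_le {t y : ℝ} (hy : y ∈ Set.Icc (0 : ℝ) 1) :
    |min 1 (max 0 t) - y| ≤ |t - y| := by
  obtain ⟨hy₀, hy₁⟩ := hy
  rw [abs_le]
  constructor <;> cases abs_cases (t - y) <;> grind

lemma norm_projCube_sub_le (v : EuclideanSpace ℝ (Fin d)) {y : EuclideanSpace ℝ (Fin d)}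
    (hy : y ∈ unitCube d) : ‖projCube v - y‖ ≤ ‖v - y‖ := by
  simp only [EuclideanSpace.norm_eq]
  gcongr with j
  simp only [PiLp.sub_apply, projCube, Real.norm_eq_abs]
  exact abs_min_one_max_zero_sub_le (hy j)

lemma norm_sub_le_sqrt_of_mem_unitCube {u v : EuclideanSpace ℝ (Fin d)}
    (hu : u ∈ unitCube d) (hv : v ∈ unitCube d) : ‖u - v‖ ≤ √d := by
  rw [EuclideanSpace.norm_eq]
  gcongr
  calc ∑ j, ‖(u - v) j‖ ^ 2 ≤ ∑ _j : Fin d, (1 : ℝ) := by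
        gcongr with j
        obtain ⟨⟨hu₀, hu₁⟩, ⟨hv₀, hv₁⟩⟩ := And.intro (hu j) (hv j)
        simp only [PiLp.sub_apply, Real.norm_eq_abs, sq_abs]
        nlinarith
    _ = d := by simp

end Cube

section Brier

variable {X V : Type*}

noncomputable def brierScore [MeasurableSpace X] [MeasurableSpace V] [NormedAddCommGroup V]
    (𝒟 : Measure (X × V)) (g : X → V) : ℝ :=
  ∫ p, ‖g p.1 - p.2‖ ^ 2 ∂𝒟

lemma norm_sub_indicator_sq [NormedAddCommGroup V] [InnerProductSpace ℝ V]
    (r : X → V) (S : Set X) (c : V) (x : X) :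
    ‖r x - S.indicator (fun _ => c) x‖ ^ 2
      = ‖r x‖ ^ 2 - S.indicator (fun x => 2 * ⟪c, r x⟫ - ‖c‖ ^ 2) x := by
  by_cases hx : x ∈ S
  · simp only [Set.indicator_of_mem hx, norm_sub_sq_real, real_inner_comm c]
    ring
  · simp [Set.indicator_of_notMem hx]

theorem integral_norm_sub_indicator_setAverage_sq [MeasurableSpace X] [NormedAddCommGroup V]
    [InnerProductSpace ℝ V] [CompleteSpace V] {ν : Measure X} [IsFiniteMeasure ν] {r : X → V}
    (hr : MemLp r 2 ν) {S : Set X} (hS : MeasurableSet S) :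
    ∫ x, ‖r x - S.indicator (fun _ => ⨍ y in S, r y ∂ν) x‖ ^ 2 ∂ν
      = ∫ x, ‖r x‖ ^ 2 ∂ν - ‖⨍ y in S, r y ∂ν‖ ^ 2 * ν.real S := by
  set a := ⨍ y in S, r y ∂ν
  have hmean : ∫ y in S, r y ∂ν = ν.real S • a :=
    (measure_smul_setAverage r (measure_ne_top ν S)).symm
  have hr₁ : Integrable r ν := hr.integrable one_le_two
  have hinner : Integrable (fun x => 2 * ⟪a, r x⟫ - ‖a‖ ^ 2) ν :=
    ((hr₁.const_inner a).const_mul 2).sub (integrable_const _)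
  have hcross : ∫ x in S, (2 * ⟪a, r x⟫ - ‖a‖ ^ 2) ∂ν = ‖a‖ ^ 2 * ν.real S := by
    have hlin : Integrable (fun x => 2 * ⟪a, r x⟫) (ν.restrict S) :=
      ((hr₁.const_inner a).const_mul 2).restrict
    rw [integral_sub hlin (integrable_const _), integral_const_mul,
      integral_inner hr₁.restrict, hmean, setIntegral_const, real_inner_smul_right,
      real_inner_self_eq_norm_sq, smul_eq_mul]
    ring
  simp_rw [norm_sub_indicator_sq]
  rw [integral_sub (hr.integrable_norm_pow' (p := 2)) (hinner.indicator hS),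
    integral_indicator hS, hcross]

lemma norm_add_indicator_apply_fst_sub [NormedAddCommGroup V] (g : X → V) (E : Set X) (c : V)
    (p : X × V) :
    ‖(g + E.indicator fun _ => c) p.1 - p.2‖
      = ‖(p.2 - g p.1) - (Prod.fst ⁻¹' E).indicator (fun _ => c) p‖ := by
  rw [← norm_neg, Pi.add_apply, ← Set.indicator_comp_right Prod.fst]
  congr 1
  simp only [Function.comp_def]
  abel

variable [MeasurableSpace X] [MeasurableSpace V]

lemma integrable_norm_add_indicator_sub_sq [NormedAddCommGroup V] {𝒟 : Measure (X × V)}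
    [IsFiniteMeasure 𝒟] {g : X → V} (hg : MemLp (fun p => p.2 - g p.1) 2 𝒟) {E : Set X}
    (hE : MeasurableSet E) (c : V) :
    Integrable (fun p => ‖(g + E.indicator fun _ => c) p.1 - p.2‖ ^ 2) 𝒟 := by
  simp_rw [norm_add_indicator_apply_fst_sub]
  exact (hg.sub (memLp_indicator_const 2 (measurable_fst hE) c
    (Or.inr (measure_ne_top _ _)))).integrable_norm_pow'

theorem brierScore_add_indicator_setAverage [NormedAddCommGroup V] [InnerProductSpace ℝ V]
    [CompleteSpace V] {𝒟 : Measure (X × V)} [IsFiniteMeasure 𝒟] {g : X → V}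
    (hg : MemLp (fun p => p.2 - g p.1) 2 𝒟) {E : Set X} (hE : MeasurableSet E) :
    brierScore 𝒟 (g + E.indicator fun _ => ⨍ p in Prod.fst ⁻¹' E, (p.2 - g p.1) ∂𝒟)
      = brierScore 𝒟 g
        - ‖⨍ p in Prod.fst ⁻¹' E, (p.2 - g p.1) ∂𝒟‖ ^ 2 * 𝒟.real (Prod.fst ⁻¹' E) := by
  simp only [brierScore, norm_add_indicator_apply_fst_sub, norm_sub_rev (g _)]
  exact integral_norm_sub_indicator_setAverage_sq hg (measurable_fst hE)

end Brier

section CubeBrier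

variable {X : Type*} [MeasurableSpace X] {d : ℕ} {𝒟 : Measure (X × EuclideanSpace ℝ (Fin d))}

lemma memLp_snd_sub_of_mem_unitCube [IsFiniteMeasure 𝒟] (hY : ∀ᵐ p ∂𝒟, p.2 ∈ unitCube d)
    {g : X → EuclideanSpace ℝ (Fin d)} (hg : Measurable g) (hg_range : ∀ x, g x ∈ unitCube d)
    (q : ENNReal) : MemLp (fun p => p.2 - g p.1) q 𝒟 :=
  MemLp.of_bound (measurable_snd.sub (hg.comp measurable_fst)).aestronglyMeasurable √d
    (hY.mono fun p hp => norm_sub_le_sqrt_of_mem_unitCube hp (hg_range p.1))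

theorem brierScore_projCube_comp_le (hY : ∀ᵐ p ∂𝒟, p.2 ∈ unitCube d)
    {g : X → EuclideanSpace ℝ (Fin d)} (hg : Integrable (fun p => ‖g p.1 - p.2‖ ^ 2) 𝒟) :
    brierScore 𝒟 (projCube ∘ g) ≤ brierScore 𝒟 g :=
  integral_mono_of_nonneg (Filter.Eventually.of_forall fun _ => sq_nonneg _) hg
    (hY.mono fun _ hp => pow_le_pow_left₀ (norm_nonneg _) (norm_projCube_sub_le _ hp) 2)

end CubeBrier

theorem brier_improvement_from_patching_general
    {X : Type*} [MeasurableSpace X] {d : ℕ}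
    (𝒟 : Measure (X × EuclideanSpace ℝ (Fin d))) [IsProbabilityMeasure 𝒟]
    (hY : ∀ᵐ p ∂𝒟, ∀ j, p.2 j ∈ Set.Icc (0 : ℝ) 1)
    (f : X → EuclideanSpace ℝ (Fin d)) (hf_meas : Measurable f)
    (hf_range : ∀ x j, f x j ∈ Set.Icc (0 : ℝ) 1)
    (E : Set X) (hE_meas : MeasurableSet E)
    (φ : EuclideanSpace ℝ (Fin d))
    (hφ : φ = ((𝒟.map Prod.fst) E).toReal⁻¹ •
      ∫ p in Prod.fst ⁻¹' E, (p.2 - f p.1) ∂𝒟)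
    (f' : X → EuclideanSpace ℝ (Fin d))
    (hf' : ∀ x, f' x = projCube (f x + Set.indicator E (fun _ => φ) x)) :
    (∫ p, ‖f p.1 - p.2‖ ^ 2 ∂𝒟) - (∫ p, ‖f' p.1 - p.2‖ ^ 2 ∂𝒟)
      ≥ ‖φ‖ ^ 2 * ((𝒟.map Prod.fst) E).toReal := by
  have hμ : ((𝒟.map Prod.fst) E).toReal = 𝒟.real (Prod.fst ⁻¹' E) := by
    rw [Measure.map_apply measurable_fst hE_meas, measureReal_def]
  rw [hμ] at hφ ⊢
  rw [← setAverage_eq] at hφ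
  obtain rfl : f' = projCube ∘ (f + E.indicator fun _ => φ) := funext hf'
  have hr := memLp_snd_sub_of_mem_unitCube hY hf_meas hf_range 2
  have hproj := brierScore_projCube_comp_le hY (integrable_norm_add_indicator_sub_sq hr hE_meas φ)
  have hpatch := brierScore_add_indicator_setAverage hr hE_meas
  rw [← hφ] at hpatch
  change brierScore 𝒟 f - brierScore 𝒟 (projCube ∘ _) ≥ _
  linarith

/-- Brier score improvement from patching.  Patching a predictor `f` on
an event `E` of positive mass by the conditional mean residual
`φ = E[y - f(x) | E]` (and projecting back to the cube) decreases the Brier score by at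
least `‖φ‖₂² · μ(E)`. -/
theorem brier_improvement_from_patching
    {X : Type*} [MeasurableSpace X] {d : ℕ}
    (𝒟 : Measure (X × EuclideanSpace ℝ (Fin d))) [IsProbabilityMeasure 𝒟]
    (hY : ∀ᵐ p ∂𝒟, ∀ j, p.2 j ∈ Set.Icc (0 : ℝ) 1)
    (f : X → EuclideanSpace ℝ (Fin d)) (hf_meas : Measurable f)
    (hf_range : ∀ x j, f x j ∈ Set.Icc (0 : ℝ) 1)
    (E : Set X) (hE_meas : MeasurableSet E) (hμE : 0 < (𝒟.map Prod.fst) E)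
    (φ : EuclideanSpace ℝ (Fin d))
    (hφ : φ = ((𝒟.map Prod.fst) E).toReal⁻¹ •
      ∫ p in Prod.fst ⁻¹' E, (p.2 - f p.1) ∂𝒟)
    (f' : X → EuclideanSpace ℝ (Fin d))
    (hf' : ∀ x, f' x = projCube (f x + Set.indicator E (fun _ => φ) x)) :
    (∫ p, ‖f p.1 - p.2‖ ^ 2 ∂𝒟) - (∫ p, ‖f' p.1 - p.2‖ ^ 2 ∂𝒟)
      ≥ ‖φ‖ ^ 2 * ((𝒟.map Prod.fst) E).toReal :=
  brier_improvement_from_patching_general 𝒟 hY f hf_meas hf_range E hE_meas φ hφ f' hf'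
end

section
/- (Per-step loss control after decision-calibrated patching.) Let 𝒟 be a distribution on 𝒳×𝒴 with 𝒴 ⊆ [0,1]^d, let ℓ be a linear loss with vectors ℓ_a ∈ [0,1]^d for a ∈ [K], let E ⊆ 𝒳 be measurable, and let f, f' : 𝒳 → [0,1]^d be predictors with f'(x) = f(x) for x ∉ E. Let π be a best-response policy for f' and π₀ a best-response policy for f such that π₀(x) = a₀ for all x ∈ E (a fixed action a₀ ∈ [K]) and π(x) = π₀(x) for x ∉ E. For each a ∈ [K] set Δ_a = {x ∈ E : π(x) = a}, and assume ‖E_{(x,y)∼𝒟}[(y − f'(x)) · 1_{Δ_a}(x)]‖₂ ≤ β for every a ∈ [K]. Then E_{(x,y)∼𝒟}[ℓ(y, π(x))] − E_{(x,y)∼𝒟}[ℓ(y, π₀(x))] ≤ β √d K. -/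
open MeasureTheory
open scoped RealInnerProductSpace

private lemma euclid_norm_le_sqrt {d : ℕ} (w : EuclideanSpace ℝ (Fin d))
    (h : ∀ j, |w j| ≤ 1) : ‖w‖ ≤ Real.sqrt d := by
  rw [EuclideanSpace.norm_eq]
  apply Real.sqrt_le_sqrt
  calc ∑ j, ‖w j‖ ^ 2 ≤ ∑ _j : Fin d, (1 : ℝ) := by
        apply Finset.sum_le_sum
        intro j _
        have : ‖w j‖ ≤ 1 := by rw [Real.norm_eq_abs]; exact h j
        nlinarith [norm_nonneg (w j)]
    _ = d := by simp

/-- Per-step loss control after decision-calibrated patching.  If `f'`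
agrees with `f` off `E`, `π` is a best-response policy for `f'`, `π₀` is a best-response
policy for `f` that is constantly `a₀` on `E` and agrees with `π` off `E`, and `f'` is
`β`-calibrated on each set `Δ_a = {x ∈ E : π x = a}`, then the expected decision loss of
`π` exceeds that of `π₀` by at most `β √d K`. -/
theorem per_step_loss_control
    {X : Type*} [MeasurableSpace X] {d K : ℕ}
    (𝒟 : Measure (X × EuclideanSpace ℝ (Fin d))) [IsProbabilityMeasure 𝒟]
    (hY : ∀ᵐ p ∂𝒟, ∀ j, p.2 j ∈ Set.Icc (0 : ℝ) 1)
    (ℓ : Fin K → EuclideanSpace ℝ (Fin d)) (hℓ : ∀ a j, ℓ a j ∈ Set.Icc (0 : ℝ) 1)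
    (E : Set X) (hE_meas : MeasurableSet E)
    (f f' : X → EuclideanSpace ℝ (Fin d))
    (hf_meas : Measurable f) (hf'_meas : Measurable f')
    (hf_range : ∀ x j, f x j ∈ Set.Icc (0 : ℝ) 1)
    (hf'_range : ∀ x j, f' x j ∈ Set.Icc (0 : ℝ) 1)
    (hagree : ∀ x ∉ E, f' x = f x)
    (π π₀ : X → Fin K) (hπ_meas : Measurable π) (hπ₀_meas : Measurable π₀)
    (hπ_br : ∀ x a, ⟪f' x, ℓ (π x)⟫ ≤ ⟪f' x, ℓ a⟫)
    (hπ₀_br : ∀ x a, ⟪f x, ℓ (π₀ x)⟫ ≤ ⟪f x, ℓ a⟫)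
    (a₀ : Fin K) (hπ₀_const : ∀ x ∈ E, π₀ x = a₀)
    (hπ_agree : ∀ x ∉ E, π x = π₀ x)
    (β : ℝ) (hβ : 0 < β)
    (hcal : ∀ a : Fin K,
      ‖∫ p, Set.indicator {q : X × EuclideanSpace ℝ (Fin d) | q.1 ∈ E ∧ π q.1 = a}
          (fun q => q.2 - f' q.1) p ∂𝒟‖ ≤ β) :
    (∫ p, ⟪p.2, ℓ (π p.1)⟫ ∂𝒟) - (∫ p, ⟪p.2, ℓ (π₀ p.1)⟫ ∂𝒟)
      ≤ β * Real.sqrt d * K := by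
  classical
  set S : Fin K → Set (X × EuclideanSpace ℝ (Fin d)) :=
    fun a => {q | q.1 ∈ E ∧ π q.1 = a} with hS
  have hSmeas : ∀ a, MeasurableSet (S a) := by
    intro a
    have : S a = Prod.fst ⁻¹' (E ∩ π ⁻¹' {a}) := by
      ext p; simp [hS, Set.mem_preimage, Set.mem_inter_iff]
    rw [this]
    exact measurable_fst (hE_meas.inter (hπ_meas (measurableSet_singleton a)))
  -- norm bounds
  have hℓdiff : ∀ a b : Fin K, ‖ℓ a - ℓ b‖ ≤ Real.sqrt d := by
    intro a b
    apply euclid_norm_le_sqrt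
    intro j
    have h1 := hℓ a j; have h2 := hℓ b j
    have : (ℓ a - ℓ b) j = ℓ a j - ℓ b j := rfl
    rw [this, abs_le]
    exact ⟨by linarith [h1.1, h2.2], by linarith [h1.2, h2.1]⟩
  have hℓnorm : ∀ a : Fin K, ‖ℓ a‖ ≤ Real.sqrt d := by
    intro a
    apply euclid_norm_le_sqrt
    intro j
    exact abs_le.mpr ⟨by linarith [(hℓ a j).1], (hℓ a j).2⟩
  have hYnorm : ∀ᵐ p ∂𝒟, ‖p.2‖ ≤ Real.sqrt d := by
    filter_upwards [hY] with p hp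
    exact euclid_norm_le_sqrt _ (fun j => abs_le.mpr ⟨by linarith [(hp j).1], (hp j).2⟩)
  have hf'norm : ∀ x, ‖f' x‖ ≤ Real.sqrt d := fun x =>
    euclid_norm_le_sqrt _ (fun j => abs_le.mpr ⟨by linarith [(hf'_range x j).1], (hf'_range x j).2⟩)
  -- measurability helpers
  have hmeas_snd : Measurable fun p : X × EuclideanSpace ℝ (Fin d) => p.2 := measurable_snd
  have hmeas_ℓπ : Measurable fun p : X × EuclideanSpace ℝ (Fin d) => ℓ (π p.1) :=
    (measurable_of_countable ℓ).comp (hπ_meas.comp measurable_fst)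
  have hmeas_ℓπ₀ : Measurable fun p : X × EuclideanSpace ℝ (Fin d) => ℓ (π₀ p.1) :=
    (measurable_of_countable ℓ).comp (hπ₀_meas.comp measurable_fst)
  -- integrability
  have int1 : Integrable (fun p : X × EuclideanSpace ℝ (Fin d) => ⟪p.2, ℓ (π p.1)⟫) 𝒟 := by
    apply Integrable.mono' (integrable_const (Real.sqrt d * Real.sqrt d))
      (hmeas_snd.inner hmeas_ℓπ).aestronglyMeasurable
    filter_upwards [hYnorm] with p hp
    calc ‖⟪p.2, ℓ (π p.1)⟫‖ ≤ ‖p.2‖ * ‖ℓ (π p.1)‖ := norm_inner_le_norm _ _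
      _ ≤ Real.sqrt d * Real.sqrt d :=
        mul_le_mul hp (hℓnorm _) (norm_nonneg _) (Real.sqrt_nonneg _)
  have int2 : Integrable (fun p : X × EuclideanSpace ℝ (Fin d) => ⟪p.2, ℓ (π₀ p.1)⟫) 𝒟 := by
    apply Integrable.mono' (integrable_const (Real.sqrt d * Real.sqrt d))
      (hmeas_snd.inner hmeas_ℓπ₀).aestronglyMeasurable
    filter_upwards [hYnorm] with p hp
    calc ‖⟪p.2, ℓ (π₀ p.1)⟫‖ ≤ ‖p.2‖ * ‖ℓ (π₀ p.1)‖ := norm_inner_le_norm _ _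
      _ ≤ Real.sqrt d * Real.sqrt d :=
        mul_le_mul hp (hℓnorm _) (norm_nonneg _) (Real.sqrt_nonneg _)
  have int3full : ∀ a : Fin K,
      Integrable (fun q : X × EuclideanSpace ℝ (Fin d) => ⟪q.2, ℓ a - ℓ a₀⟫) 𝒟 := by
    intro a
    apply Integrable.mono' (integrable_const (Real.sqrt d * Real.sqrt d))
      (hmeas_snd.inner measurable_const).aestronglyMeasurable
    filter_upwards [hYnorm] with p hp
    calc ‖⟪p.2, ℓ a - ℓ a₀⟫‖ ≤ ‖p.2‖ * ‖ℓ a - ℓ a₀‖ := norm_inner_le_norm _ _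
      _ ≤ Real.sqrt d * Real.sqrt d :=
        mul_le_mul hp (hℓdiff _ _) (norm_nonneg _) (Real.sqrt_nonneg _)
  have int3 : ∀ a : Fin K,
      Integrable (Set.indicator (S a) (fun q => ⟪q.2, ℓ a - ℓ a₀⟫)) 𝒟 :=
    fun a => (int3full a).indicator (hSmeas a)
  have intVecfull : Integrable (fun q : X × EuclideanSpace ℝ (Fin d) => q.2 - f' q.1) 𝒟 := by
    apply Integrable.mono' (integrable_const (Real.sqrt d + Real.sqrt d))
      (hmeas_snd.sub (hf'_meas.comp measurable_fst)).aestronglyMeasurable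
    filter_upwards [hYnorm] with p hp
    calc ‖p.2 - f' p.1‖ ≤ ‖p.2‖ + ‖f' p.1‖ := norm_sub_le _ _
      _ ≤ Real.sqrt d + Real.sqrt d := add_le_add hp (hf'norm _)
  have intVec : ∀ a : Fin K,
      Integrable (Set.indicator (S a) (fun q => q.2 - f' q.1)) 𝒟 :=
    fun a => intVecfull.indicator (hSmeas a)
  have int4 : ∀ a : Fin K,
      Integrable (Set.indicator (S a) (fun q => ⟪q.2 - f' q.1, ℓ a - ℓ a₀⟫)) 𝒟 := by
    intro a
    have full : Integrable (fun q : X × EuclideanSpace ℝ (Fin d) =>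
        ⟪q.2 - f' q.1, ℓ a - ℓ a₀⟫) 𝒟 := by
      apply Integrable.mono' (integrable_const ((Real.sqrt d + Real.sqrt d) * Real.sqrt d))
        ((hmeas_snd.sub (hf'_meas.comp measurable_fst)).inner
          measurable_const).aestronglyMeasurable
      filter_upwards [hYnorm] with p hp
      calc ‖⟪p.2 - f' p.1, ℓ a - ℓ a₀⟫‖ ≤ ‖p.2 - f' p.1‖ * ‖ℓ a - ℓ a₀‖ :=
            norm_inner_le_norm _ _
        _ ≤ (Real.sqrt d + Real.sqrt d) * Real.sqrt d := by
            apply mul_le_mul _ (hℓdiff _ _) (norm_nonneg _) (by positivity)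
            calc ‖p.2 - f' p.1‖ ≤ ‖p.2‖ + ‖f' p.1‖ := norm_sub_le _ _
              _ ≤ Real.sqrt d + Real.sqrt d := add_le_add hp (hf'norm _)
    exact full.indicator (hSmeas a)
  -- pointwise decomposition
  have key : ∀ p : X × EuclideanSpace ℝ (Fin d),
      ⟪p.2, ℓ (π p.1)⟫ - ⟪p.2, ℓ (π₀ p.1)⟫
        = ∑ a : Fin K, Set.indicator (S a) (fun q => ⟪q.2, ℓ a - ℓ a₀⟫) p := by
    intro p
    by_cases hp : p.1 ∈ E
    · rw [hπ₀_const p.1 hp, Finset.sum_eq_single (π p.1)]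
      · rw [Set.indicator_of_mem (show p ∈ S (π p.1) from ⟨hp, rfl⟩)]
        rw [inner_sub_right]
      · intro b _ hb
        exact Set.indicator_of_notMem (fun hmem => hb hmem.2.symm) _
      · intro h; exact absurd (Finset.mem_univ _) h
    · rw [hπ_agree p.1 hp, sub_self]
      refine (Finset.sum_eq_zero fun b _ => ?_).symm
      exact Set.indicator_of_notMem (fun hmem => hp hmem.1) _
  -- rewrite LHS as a sum
  have h1 : (∫ p, ⟪p.2, ℓ (π p.1)⟫ ∂𝒟) - (∫ p, ⟪p.2, ℓ (π₀ p.1)⟫ ∂𝒟)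
      = ∑ a : Fin K, ∫ p, Set.indicator (S a) (fun q => ⟪q.2, ℓ a - ℓ a₀⟫) p ∂𝒟 := by
    rw [← integral_sub int1 int2, ← integral_finset_sum _ (fun a _ => int3 a)]
    exact integral_congr_ae (Filter.Eventually.of_forall key)
  rw [h1]
  -- bound each term
  have hterm : ∀ a : Fin K,
      (∫ p, Set.indicator (S a) (fun q => ⟪q.2, ℓ a - ℓ a₀⟫) p ∂𝒟)
        ≤ β * Real.sqrt d := by
    intro a
    have step1 : (∫ p, Set.indicator (S a) (fun q => ⟪q.2, ℓ a - ℓ a₀⟫) p ∂𝒟)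
        ≤ ∫ p, Set.indicator (S a) (fun q => ⟪q.2 - f' q.1, ℓ a - ℓ a₀⟫) p ∂𝒟 := by
      apply integral_mono (int3 a) (int4 a)
      intro p
      by_cases hp : p ∈ S a
      · rw [Set.indicator_of_mem hp, Set.indicator_of_mem hp]
        have hbr : ⟪f' p.1, ℓ a⟫ ≤ ⟪f' p.1, ℓ a₀⟫ := by
          have h := hπ_br p.1 a₀
          rwa [hp.2] at h
        simp only [inner_sub_left, inner_sub_right]
        linarith
      · rw [Set.indicator_of_notMem hp, Set.indicator_of_notMem hp]
    have step2 : (∫ p, Set.indicator (S a) (fun q => ⟪q.2 - f' q.1, ℓ a - ℓ a₀⟫) p ∂𝒟)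
        = ⟪∫ p, Set.indicator (S a) (fun q => q.2 - f' q.1) p ∂𝒟, ℓ a - ℓ a₀⟫ := by
      rw [real_inner_comm, ← integral_inner (intVec a)]
      congr 1
      funext p
      by_cases hp : p ∈ S a
      · rw [Set.indicator_of_mem hp, Set.indicator_of_mem hp, real_inner_comm]
      · rw [Set.indicator_of_notMem hp, Set.indicator_of_notMem hp, inner_zero_right]
    have step3 : ⟪∫ p, Set.indicator (S a) (fun q => q.2 - f' q.1) p ∂𝒟, ℓ a - ℓ a₀⟫
        ≤ β * Real.sqrt d := by
      calc ⟪∫ p, Set.indicator (S a) (fun q => q.2 - f' q.1) p ∂𝒟, ℓ a - ℓ a₀⟫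
          ≤ ‖∫ p, Set.indicator (S a) (fun q => q.2 - f' q.1) p ∂𝒟‖ * ‖ℓ a - ℓ a₀‖ :=
            real_inner_le_norm _ _
        _ ≤ β * Real.sqrt d :=
            mul_le_mul (hcal a) (hℓdiff a a₀) (norm_nonneg _) hβ.le
    linarith
  calc ∑ a : Fin K, ∫ p, Set.indicator (S a) (fun q => ⟪q.2, ℓ a - ℓ a₀⟫) p ∂𝒟
      ≤ ∑ _a : Fin K, β * Real.sqrt d := Finset.sum_le_sum fun a _ => hterm a
    _ = β * Real.sqrt d * K := by
        rw [Finset.sum_const, Finset.card_univ, Fintype.card_fin, nsmul_eq_mul]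
        ring
end

section
/- (Brier improvement from patching with a rounded offset.) Let f : 𝒳 → [0,1]^d be a predictor, E ⊆ 𝒳 a measurable event with μ(E) > 0 under distribution D, let φ = E_{(x,y)∼D}[y − f(x) | E], and let φ̃ ∈ ℝ^d satisfy |φ̃_j − φ_j| ≤ 1/(2m) for every coordinate j ∈ [d], where m is a positive integer. Define f'(x) = proj_{[0,1]^d}(f(x) + φ̃·1_E(x)). Then B(f, D) − B(f', D) ≥ ‖φ‖₂² · μ(E) − d/(4m²). -/
open MeasureTheory
open scoped RealInnerProductSpace

/-!
On the event `E` the unprojected patch changes the squared error at `(x, y)` by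
`‖φ̃‖² - 2⟪y - f x, φ̃⟫`, and projecting onto the cube, which contains `y`, can only help.
Integrating over `E` turns the gain into `μ(E) (2⟪φ, φ̃⟫ - ‖φ̃‖²) = μ(E) (‖φ‖² - ‖φ̃ - φ‖²)`,
and the rounding error costs at most `‖φ̃ - φ‖² ≤ d/(4m²)` because `μ(E) ≤ 1`.
-/

lemma EuclideanSpace.norm_sq_le_card_mul_sq {ι : Type*} [Fintype ι] {w : EuclideanSpace ℝ ι}
    {c : ℝ} (hw : ∀ i, |w i| ≤ c) : ‖w‖ ^ 2 ≤ Fintype.card ι * c ^ 2 := by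
  rw [EuclideanSpace.real_norm_sq_eq, ← nsmul_eq_mul]
  refine Finset.sum_le_card_nsmul _ _ _ fun i _ => ?_
  rw [← sq_abs]
  exact pow_le_pow_left₀ (abs_nonneg _) (hw i) 2

lemma norm_sub_sq_le_of_mem_cube {d : ℕ} {u w : EuclideanSpace ℝ (Fin d)}
    (hu : ∀ j, u j ∈ Set.Icc (0 : ℝ) 1) (hw : ∀ j, w j ∈ Set.Icc (0 : ℝ) 1) :
    ‖u - w‖ ^ 2 ≤ d := by
  have hcoord : ∀ j, |(u - w) j| ≤ 1 := fun j => by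
    rw [PiLp.sub_apply, abs_sub_le_iff]
    constructor <;> linarith [(hu j).1, (hu j).2, (hw j).1, (hw j).2]
  simpa using EuclideanSpace.norm_sq_le_card_mul_sq hcoord

lemma norm_sub_le_sqrt_of_mem_cube {d : ℕ} {u w : EuclideanSpace ℝ (Fin d)}
    (hu : ∀ j, u j ∈ Set.Icc (0 : ℝ) 1) (hw : ∀ j, w j ∈ Set.Icc (0 : ℝ) 1) :
    ‖u - w‖ ≤ √d :=
  (Real.le_sqrt (norm_nonneg _) d.cast_nonneg).2 (norm_sub_sq_le_of_mem_cube hu hw)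

lemma norm_sub_sq_le_of_abs_sub_le {d m : ℕ} {u w : EuclideanSpace ℝ (Fin d)}
    (h : ∀ j, |u j - w j| ≤ 1 / (2 * m)) : ‖u - w‖ ^ 2 ≤ (d : ℝ) / (4 * m ^ 2) := by
  calc ‖u - w‖ ^ 2 ≤ d * (1 / (2 * (m : ℝ))) ^ 2 := by
        simpa using EuclideanSpace.norm_sq_le_card_mul_sq (w := u - w) h
    _ = d / (4 * (m : ℝ) ^ 2) := by ring

section projCube

variable {d : ℕ}

@[simp]
lemma projCube_apply (v : EuclideanSpace ℝ (Fin d)) (j : Fin d) :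
    projCube v j = min 1 (max 0 (v j)) :=
  rfl

lemma projCube_mem (v : EuclideanSpace ℝ (Fin d)) (j : Fin d) :
    projCube v j ∈ Set.Icc (0 : ℝ) 1 := by
  rw [projCube_apply]
  exact ⟨le_min zero_le_one (le_max_left 0 _), min_le_left _ _⟩

lemma projCube_of_mem {v : EuclideanSpace ℝ (Fin d)} (hv : ∀ j, v j ∈ Set.Icc (0 : ℝ) 1) :
    projCube v = v := by
  ext j
  rw [projCube_apply, max_eq_right (hv j).1, min_eq_right (hv j).2]

lemma continuous_projCube : Continuous (projCube (d := d)) :=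
  (PiLp.continuous_toLp 2 _).comp <| continuous_pi fun j =>
    continuous_const.min <| continuous_const.max <|
      (continuous_apply j).comp (PiLp.continuous_ofLp 2 _)

lemma norm_projCube_sub_sq_le (v : EuclideanSpace ℝ (Fin d)) {y : EuclideanSpace ℝ (Fin d)}
    (hy : ∀ j, y j ∈ Set.Icc (0 : ℝ) 1) : ‖projCube v - y‖ ^ 2 ≤ ‖v - y‖ ^ 2 := by
  simp only [EuclideanSpace.real_norm_sq_eq, PiLp.sub_apply, projCube_apply]
  refine Finset.sum_le_sum fun j _ => ?_
  have := hy j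
  rw [sq_le_sq]
  grind

lemma norm_projCube_add_sub_sq_le (u v : EuclideanSpace ℝ (Fin d)) {y : EuclideanSpace ℝ (Fin d)}
    (hy : ∀ j, y j ∈ Set.Icc (0 : ℝ) 1) :
    ‖projCube (u + v) - y‖ ^ 2 ≤ ‖u - y‖ ^ 2 - (2 * ⟪y - u, v⟫ - ‖v‖ ^ 2) := by
  have hexpand : ‖u + v - y‖ ^ 2 = ‖u - y‖ ^ 2 - (2 * ⟪y - u, v⟫ - ‖v‖ ^ 2) := by
    rw [norm_sub_rev u y, ← norm_neg (u + v - y), neg_sub, sub_add_eq_sub_sub,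
      norm_sub_sq_real]
    ring
  exact hexpand ▸ norm_projCube_sub_sq_le _ hy

end projCube

lemma mul_norm_sq_sub_norm_sub_sq_le {F : Type*} [NormedAddCommGroup F] [InnerProductSpace ℝ F]
    {a : ℝ} (ha : a ≤ 1) (φ v : F) :
    a * ‖φ‖ ^ 2 - ‖v - φ‖ ^ 2 ≤ a * (2 * ⟪φ, v⟫ - ‖v‖ ^ 2) := by
  have hpolar : 2 * ⟪φ, v⟫ - ‖v‖ ^ 2 = ‖φ‖ ^ 2 - ‖v - φ‖ ^ 2 := by
    rw [norm_sub_sq_real, real_inner_comm]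
    ring
  rw [hpolar]
  nlinarith [mul_nonneg (sub_nonneg.2 ha) (sq_nonneg ‖v - φ‖)]

lemma setIntegral_two_inner_sub_norm_sq {α F : Type*} [MeasurableSpace α] {μ : Measure α}
    [NormedAddCommGroup F] [InnerProductSpace ℝ F] [CompleteSpace F]
    {s : Set α} (hs : μ s ≠ ⊤) {r : α → F} (hr : IntegrableOn r s μ) (v : F) :
    ∫ p in s, (2 * ⟪r p, v⟫ - ‖v‖ ^ 2) ∂μ = μ.real s * (2 * ⟪⨍ p in s, r p ∂μ, v⟫ - ‖v‖ ^ 2) := by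
  have : IsFiniteMeasure (μ.restrict s) := isFiniteMeasure_restrict.2 hs
  simp_rw [real_inner_comm v]
  rw [integral_sub ((hr.const_inner v).const_mul (2 : ℝ)) (integrable_const _), integral_const_mul,
    integral_inner hr, ← measure_smul_setAverage _ hs, inner_smul_right, setIntegral_const,
    smul_eq_mul]
  ring

section Brier

variable {X : Type*} [MeasurableSpace X] {d : ℕ} {D : Measure (X × EuclideanSpace ℝ (Fin d))}
  [IsFiniteMeasure D] (hY : ∀ᵐ p ∂D, ∀ j, p.2 j ∈ Set.Icc (0 : ℝ) 1)
  {f : X → EuclideanSpace ℝ (Fin d)} (hf : Measurable f)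
  (hf_range : ∀ x j, f x j ∈ Set.Icc (0 : ℝ) 1)
include hY hf hf_range

lemma integrable_norm_sub_sq : Integrable (fun p => ‖f p.1 - p.2‖ ^ 2) D := by
  refine .of_bound (by fun_prop) d ?_
  filter_upwards [hY] with p hp
  rw [Real.norm_of_nonneg (by positivity)]
  exact norm_sub_sq_le_of_mem_cube (hf_range p.1) hp

lemma integrable_residual : Integrable (fun p => p.2 - f p.1) D := by
  refine .of_bound (by fun_prop) √d ?_
  filter_upwards [hY] with p hp
  exact norm_sub_le_sqrt_of_mem_cube hp (hf_range p.1)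

lemma setIntegral_patch_gain_le {E : Set X} (hE : MeasurableSet E) (v : EuclideanSpace ℝ (Fin d)) :
    ∫ p in Prod.fst ⁻¹' E, (2 * ⟪p.2 - f p.1, v⟫ - ‖v‖ ^ 2) ∂D ≤
      (∫ p, ‖f p.1 - p.2‖ ^ 2 ∂D) -
        ∫ p, ‖projCube (f p.1 + E.indicator (fun _ => v) p.1) - p.2‖ ^ 2 ∂D := by
  have hS : MeasurableSet (Prod.fst ⁻¹' E : Set (X × EuclideanSpace ℝ (Fin d))) :=
    measurable_fst hE
  have hf' : Measurable fun x => projCube (f x + E.indicator (fun _ => v) x) :=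
    continuous_projCube.measurable.comp (hf.add (measurable_const.indicator hE))
  have hgain_int : Integrable (fun p => 2 * ⟪p.2 - f p.1, v⟫ - ‖v‖ ^ 2) D :=
    (((integrable_residual hY hf hf_range).inner_const v).const_mul 2).sub (integrable_const _)
  have hf_int := integrable_norm_sub_sq hY hf hf_range
  have hf'_int := integrable_norm_sub_sq hY hf' fun x => projCube_mem _
  rw [← integral_indicator hS, ← integral_sub hf_int hf'_int]
  refine integral_mono_ae (hgain_int.indicator hS) (hf_int.sub hf'_int) ?_
  filter_upwards [hY] with p hp
  by_cases hpE : p.1 ∈ E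
  · rw [Set.indicator_of_mem (show p ∈ Prod.fst ⁻¹' E from hpE), Set.indicator_of_mem hpE]
    linarith [norm_projCube_add_sub_sq_le (f p.1) v hp]
  · rw [Set.indicator_of_notMem (show p ∉ Prod.fst ⁻¹' E from hpE), Set.indicator_of_notMem hpE,
      add_zero, projCube_of_mem (hf_range p.1), sub_self]

end Brier

theorem brier_improvement_from_rounded_patching_general
    {X : Type*} [MeasurableSpace X] {d : ℕ}
    (D : Measure (X × EuclideanSpace ℝ (Fin d))) [IsProbabilityMeasure D]
    (hY : ∀ᵐ p ∂D, ∀ j, p.2 j ∈ Set.Icc (0 : ℝ) 1)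
    (f : X → EuclideanSpace ℝ (Fin d)) (hf_meas : Measurable f)
    (hf_range : ∀ x j, f x j ∈ Set.Icc (0 : ℝ) 1)
    (E : Set X) (hE_meas : MeasurableSet E)
    (φ : EuclideanSpace ℝ (Fin d))
    (hφ : φ = ((D.map Prod.fst) E).toReal⁻¹ •
      ∫ p in Prod.fst ⁻¹' E, (p.2 - f p.1) ∂D)
    (m : ℕ)
    (φt : EuclideanSpace ℝ (Fin d))
    (hφt : ∀ j, |φt j - φ j| ≤ 1 / (2 * m))
    (f' : X → EuclideanSpace ℝ (Fin d))
    (hf' : ∀ x, f' x = projCube (f x + Set.indicator E (fun _ => φt) x)) :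
    (∫ p, ‖f p.1 - p.2‖ ^ 2 ∂D) - (∫ p, ‖f' p.1 - p.2‖ ^ 2 ∂D)
      ≥ ‖φ‖ ^ 2 * ((D.map Prod.fst) E).toReal - d / (4 * m ^ 2) := by
  rw [Measure.map_apply measurable_fst hE_meas, ← measureReal_def] at hφ ⊢
  rw [← setAverage_eq] at hφ
  have hgain := setIntegral_two_inner_sub_norm_sq (measure_ne_top D (Prod.fst ⁻¹' E))
    (integrable_residual hY hf_meas hf_range).integrableOn φt
  rw [← hφ] at hgain
  simp only [hf', ge_iff_le]
  calc ‖φ‖ ^ 2 * D.real (Prod.fst ⁻¹' E) - d / (4 * m ^ 2)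
      ≤ D.real (Prod.fst ⁻¹' E) * ‖φ‖ ^ 2 - ‖φt - φ‖ ^ 2 := by
        linarith [norm_sub_sq_le_of_abs_sub_le hφt]
    _ ≤ D.real (Prod.fst ⁻¹' E) * (2 * ⟪φ, φt⟫ - ‖φt‖ ^ 2) :=
        mul_norm_sq_sub_norm_sub_sq_le measureReal_le_one φ φt
    _ ≤ _ := hgain ▸ setIntegral_patch_gain_le hY hf_meas hf_range hE_meas φt

/-- Brier improvement from patching with a rounded offset.  Patching a
predictor `f` on an event `E` of positive mass by a vector `φ̃` within `1/(2m)` of the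
conditional mean residual `φ = E[y - f(x) | E]` in every coordinate (and projecting back
to the cube) decreases the Brier score by at least `‖φ‖₂²·μ(E) - d/(4m²)`. -/
theorem brier_improvement_from_rounded_patching
    {X : Type*} [MeasurableSpace X] {d : ℕ}
    (D : Measure (X × EuclideanSpace ℝ (Fin d))) [IsProbabilityMeasure D]
    (hY : ∀ᵐ p ∂D, ∀ j, p.2 j ∈ Set.Icc (0 : ℝ) 1)
    (f : X → EuclideanSpace ℝ (Fin d)) (hf_meas : Measurable f)
    (hf_range : ∀ x j, f x j ∈ Set.Icc (0 : ℝ) 1)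
    (E : Set X) (hE_meas : MeasurableSet E) (hμE : 0 < (D.map Prod.fst) E)
    (φ : EuclideanSpace ℝ (Fin d))
    (hφ : φ = ((D.map Prod.fst) E).toReal⁻¹ •
      ∫ p in Prod.fst ⁻¹' E, (p.2 - f p.1) ∂D)
    (m : ℕ) (hm : 0 < m)
    (φt : EuclideanSpace ℝ (Fin d))
    (hφt : ∀ j, |φt j - φ j| ≤ 1 / (2 * m))
    (f' : X → EuclideanSpace ℝ (Fin d))
    (hf' : ∀ x, f' x = projCube (f x + Set.indicator E (fun _ => φt) x)) :
    (∫ p, ‖f p.1 - p.2‖ ^ 2 ∂D) - (∫ p, ‖f' p.1 - p.2‖ ^ 2 ∂D)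
      ≥ ‖φ‖ ^ 2 * ((D.map Prod.fst) E).toReal - d / (4 * m ^ 2) :=
  brier_improvement_from_rounded_patching_general D hY f hf_meas hf_range E hE_meas φ hφ m φt hφt f'
    hf'
end
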